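/- Let f : A → ℂ be an exponential-polynomial function on a lattice A ≅ ℤ^r, f(λ) = ∑_{χ∈X} χ(λ) P_χ(λ) with distinct unitary-or-not characters χ. Define f^w(λ) = ∑_{χ∈X, |χ|≡1} χ(λ) P_χ(λ) (the sum over characters of absolute value 1). If every χ ∈ X satisfies |χ(λ)| ≤ 1 on the 'negative cone' A⁻ = {λ : ⟨α, λ⟩ ≤ 0 ∀α ∈ Δ} for a finite set Δ of linear functionals spanning, then f(λ) - f^w(λ) → 0 as λ → -∞ in the cone (i.e., ⟨α,λ⟩ → -∞ for all α ∈ Δ with ratios bounded). -/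

import Mathlib

/-!
Write `|χ_z(λ)| = exp φ_z(λ)` with `φ_z = ∑ i, log |z_i| · λ_i` linear. The hypothesis says
`φ_z ≤ 0` on the lattice points of the closed cone; by homogeneity and density of rational points
this gives `φ_z ≤ 0` on the open real cone, and if `z` is not unitary (`φ_z ≠ 0`) a small
perturbation upgrades it to `φ_z(λ) ≤ -δ s` whenever every `⟨α, λ⟩ ≤ -η s`. Going to `-∞` with
comparable rates, `s = -⟨α₀, λ⟩` tends to `∞` and controls `‖λ‖` (since `Δ` spans), so
`|χ_z(λ) P_z(λ)| ≤ C (1 + K s)^d e^{-δ s} → 0` for each non-unitary `z`, and `f - f^w` is the finite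
sum of these terms.
-/

open Filter Topology

theorem exists_pos_nat_mul_eq_intCast {ι : Type*} [Fintype ι] (q : ι → ℚ) :
    ∃ n : ℕ, 0 < n ∧ ∃ l : ι → ℤ, ∀ i, (n : ℚ) * q i = l i := by
  classical
  refine ⟨∏ i, (q i).den, Finset.prod_pos fun i _ => (q i).den_pos,
    fun i => (q i).num * ∏ j ∈ Finset.univ.erase i, ((q j).den : ℤ), fun i => ?_⟩
  rw [← Finset.mul_prod_erase _ _ (Finset.mem_univ i)]
  push_cast
  rw [mul_right_comm, mul_comm _ (q i), Rat.mul_den_eq_num]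

theorem LinearMap.nonpos_of_nonpos_on_intCone {ι : Type*} [Fintype ι]
    (Δ : Finset ((ι → ℝ) →ₗ[ℝ] ℝ)) (φ : (ι → ℝ) →ₗ[ℝ] ℝ)
    (hφ : ∀ l : ι → ℤ, (∀ α ∈ Δ, α (fun i => (l i : ℝ)) ≤ 0) → φ (fun i => (l i : ℝ)) ≤ 0)
    {x : ι → ℝ} (hx : ∀ α ∈ Δ, α x < 0) : φ x ≤ 0 := by
  have hrat : ∀ q : ι → ℚ, (∀ α ∈ Δ, α (fun i => (q i : ℝ)) < 0) → φ (fun i => (q i : ℝ)) ≤ 0 := by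
    intro q hq
    obtain ⟨n, hn, l, hl⟩ := exists_pos_nat_mul_eq_intCast q
    have hscale : (fun i => (l i : ℝ)) = (n : ℝ) • fun i => (q i : ℝ) := by
      ext i
      simpa using congrArg (fun t : ℚ => (t : ℝ)) (hl i).symm
    have hnR : (0 : ℝ) < n := by exact_mod_cast hn
    have := hφ l fun α hα => by
      rw [hscale, map_smul, smul_eq_mul]
      exact mul_nonpos_of_nonneg_of_nonpos hnR.le (hq α hα).le
    rw [hscale, map_smul, smul_eq_mul] at this
    exact nonpos_of_mul_nonpos_right this hnR
  have hopen : IsOpen {x : ι → ℝ | ∀ α ∈ Δ, α x < 0} := by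
    simp only [Set.ofPred_forall]
    exact isOpen_biInter_finset fun α _ =>
      isOpen_lt (LinearMap.continuous_of_finiteDimensional α) continuous_const
  have hdense : DenseRange fun (q : ι → ℚ) i => (q i : ℝ) :=
    DenseRange.piMap fun _ => Rat.denseRange_cast
  have hclosed : IsClosed {x : ι → ℝ | φ x ≤ 0} :=
    isClosed_le (LinearMap.continuous_of_finiteDimensional φ) continuous_const
  refine closure_minimal ?_ hclosed (hdense.open_subset_closure_inter hopen hx)
  rintro _ ⟨hy, q, rfl⟩
  exact hrat q hy

theorem LinearMap.exists_le_neg_mul_of_nonpos_on_cone {E : Type*} [AddCommGroup E] [Module ℝ E]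
    (Δ : Finset (E →ₗ[ℝ] ℝ)) {φ : E →ₗ[ℝ] ℝ} (hφ : φ ≠ 0)
    (hcone : ∀ x, (∀ α ∈ Δ, α x < 0) → φ x ≤ 0) {η : ℝ} (hη : 0 < η) :
    ∃ δ > 0, ∀ x s, 0 < s → (∀ α ∈ Δ, α x ≤ -(η * s)) → φ x ≤ -(δ * s) := by
  obtain ⟨w, hw⟩ : ∃ w, φ w ≠ 0 := by
    by_contra! h
    exact hφ (LinearMap.ext h)
  set v := (φ w)⁻¹ • w
  have hv : φ v = 1 := by simp [v, hw]
  set B := ∑ α ∈ Δ, |α v|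
  refine ⟨η / (B + 1), by positivity, fun x s hs hx => ?_⟩
  -- moving `x` a little in the direction `v` keeps it in the open cone but raises `φ` by `δ s`
  have hshift : ∀ α ∈ Δ, α (x + (η / (B + 1) * s) • v) < 0 := by
    intro α hα
    have hαv : α v ≤ B := (le_abs_self _).trans
      (Finset.single_le_sum (f := fun α => |α v|) (fun _ _ => abs_nonneg _) hα)
    have hδB : η / (B + 1) * B < η := by
      rw [div_mul_eq_mul_div, div_lt_iff₀ (by positivity)]
      nlinarith
    rw [map_add, map_smul, smul_eq_mul]
    nlinarith [hx α hα, mul_le_mul_of_nonneg_left hαv (by positivity : 0 ≤ η / (B + 1) * s)]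
  have := hcone _ hshift
  rw [map_add, map_smul, hv, smul_eq_mul, mul_one] at this
  linarith

theorem exists_norm_le_mul_of_span_eq_top {E : Type*} [NormedAddCommGroup E] [NormedSpace ℝ E]
    [FiniteDimensional ℝ E] (Δ : Finset (E →ₗ[ℝ] ℝ))
    (hspan : Submodule.span ℝ (Δ : Set (E →ₗ[ℝ] ℝ)) = ⊤) :
    ∃ K : ℝ, ∀ x s, 0 ≤ s → (∀ α ∈ Δ, |α x| ≤ s) → ‖x‖ ≤ K * s := by
  let Φ : E →ₗ[ℝ] (Δ → ℝ) := LinearMap.pi fun α => α.1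
  have hker : LinearMap.ker Φ = ⊥ := by
    refine LinearMap.ker_eq_bot'.mpr fun x hx => ?_
    have heval : Module.Dual.eval ℝ E x = 0 :=
      LinearMap.ext_on hspan fun α hα => congrFun hx ⟨α, hα⟩
    exact (Module.forall_dual_apply_eq_zero_iff ℝ x).mp fun α => LinearMap.congr_fun heval α
  obtain ⟨K, -, hK⟩ := Φ.exists_antilipschitzWith hker
  refine ⟨K, fun x s hs hx => ?_⟩
  have hΦ : ‖Φ x‖ ≤ s := (pi_norm_le_iff_of_nonneg hs).mpr fun α => hx α.1 α.2
  calc ‖x‖ ≤ K * ‖Φ x‖ := by simpa using hK.le_mul_dist x 0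
    _ ≤ K * s := by gcongr

theorem MvPolynomial.norm_eval_le_mul_one_add_pow {σ 𝕜 : Type*} [NormedField 𝕜]
    (P : MvPolynomial σ 𝕜) :
    ∃ C, ∀ (B : ℝ) (x : σ → 𝕜), 0 ≤ B → (∀ i, ‖x i‖ ≤ B) →
      ‖MvPolynomial.eval x P‖ ≤ C * (1 + B) ^ P.totalDegree := by
  refine ⟨∑ e ∈ P.support, ‖P.coeff e‖, fun B x hB hx => ?_⟩
  rw [MvPolynomial.eval_eq, Finset.sum_mul]
  refine (norm_sum_le _ _).trans (Finset.sum_le_sum fun e he => ?_)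
  rw [norm_mul, norm_prod]
  gcongr
  calc ∏ i ∈ e.support, ‖x i ^ e i‖ ≤ ∏ i ∈ e.support, (1 + B) ^ e i := by
        gcongr with i
        rw [norm_pow]
        gcongr
        linarith [hx i]
    _ = (1 + B) ^ (e.sum fun _ k => k) := Finset.prod_pow_eq_pow_sum _ _ _
    _ ≤ (1 + B) ^ P.totalDegree := pow_le_pow_right₀ (by linarith) (le_totalDegree he)

theorem tendsto_one_add_mul_pow_mul_exp_neg_atTop (a : ℝ) (d : ℕ) {δ : ℝ} (hδ : 0 < δ) :
    Tendsto (fun t => (1 + a * t) ^ d * Real.exp (-δ * t)) atTop (𝓝 0) := by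
  have hterm : ∀ k ∈ Finset.range (d + 1), Tendsto
      (fun t => a ^ k * d.choose k * (t ^ (k : ℝ) * Real.exp (-δ * t))) atTop (𝓝 0) := fun k _ => by
    simpa using (tendsto_rpow_mul_exp_neg_mul_atTop_nhds_zero k δ hδ).const_mul (a ^ k * d.choose k)
  have hsum := tendsto_finsetSum _ hterm
  rw [Finset.sum_const_zero] at hsum
  refine hsum.congr fun t => ?_
  rw [add_comm 1, add_pow, Finset.sum_mul]
  refine Finset.sum_congr rfl fun k _ => ?_
  rw [Real.rpow_natCast]
  ring

theorem Units.norm_prod_zpow {ι : Type*} [Fintype ι] (z : ι → ℂˣ) (l : ι → ℤ) :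
    ‖((∏ i, z i ^ l i : ℂˣ) : ℂ)‖ =
      Real.exp (Fintype.linearCombination ℝ (fun i => Real.log ‖(z i : ℂ)‖) fun i => (l i : ℝ)) := by
  rw [Fintype.linearCombination_apply, Real.exp_sum, Units.coe_prod, norm_prod]
  refine Finset.prod_congr rfl fun i _ => ?_
  have hz : 0 < ‖(z i : ℂ)‖ := norm_pos_iff.mpr (z i).ne_zero
  rw [Units.val_zpow_eq_zpow_val, norm_zpow, ← Real.rpow_intCast, Real.rpow_def_of_pos hz,
    mul_comm]
  rfl

def coneAtBot {ι : Type*} (Δ : Finset ((ι → ℝ) →ₗ[ℝ] ℝ)) (η : ℝ) : Filter (ι → ℤ) :=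
  ⨅ R : ℝ, 𝓟 {l | (∀ α ∈ Δ, α (fun i => (l i : ℝ)) < -R) ∧
    ∀ α ∈ Δ, ∀ β ∈ Δ, α (fun i => (l i : ℝ)) < η * β (fun i => (l i : ℝ))}

theorem eventually_coneAtBot_iff {ι : Type*} {Δ : Finset ((ι → ℝ) →ₗ[ℝ] ℝ)} {η : ℝ}
    {p : (ι → ℤ) → Prop} :
    (∀ᶠ l in coneAtBot Δ η, p l) ↔ ∃ R > 0, ∀ l : ι → ℤ,
      (∀ α ∈ Δ, α (fun i => (l i : ℝ)) < -R) →
      (∀ α ∈ Δ, ∀ β ∈ Δ, α (fun i => (l i : ℝ)) < η * β (fun i => (l i : ℝ))) → p l := by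
  have hanti : Antitone fun R : ℝ => {l : ι → ℤ | (∀ α ∈ Δ, α (fun i => (l i : ℝ)) < -R) ∧
      ∀ α ∈ Δ, ∀ β ∈ Δ, α (fun i => (l i : ℝ)) < η * β (fun i => (l i : ℝ))} :=
    fun R R' hR l hl => ⟨fun α hα => (hl.1 α hα).trans_le (neg_le_neg hR), hl.2⟩
  rw [coneAtBot, (hasBasis_iInf_principal hanti.directed_ge).eventually_iff]
  constructor
  · rintro ⟨R, -, hR⟩
    refine ⟨max R 1, by positivity, fun l h1 h2 => hR ⟨fun α hα => ?_, h2⟩⟩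
    exact (h1 α hα).trans_le (neg_le_neg (le_max_left R 1))
  · rintro ⟨R, -, hR⟩
    exact ⟨R, trivial, fun l hl => hR l hl.1 hl.2⟩

theorem Units.exists_norm_prod_zpow_le_exp_neg {ι : Type*} [Fintype ι]
    (Δ : Finset ((ι → ℝ) →ₗ[ℝ] ℝ)) (z : ι → ℂˣ) (hz1 : ∃ i, ‖(z i : ℂ)‖ ≠ 1)
    (hz : ∀ l : ι → ℤ, (∀ α ∈ Δ, α (fun i => (l i : ℝ)) ≤ 0) → ‖((∏ i, z i ^ l i : ℂˣ) : ℂ)‖ ≤ 1)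
    {η : ℝ} (hη : 0 < η) :
    ∃ δ > 0, ∀ (l : ι → ℤ) (s : ℝ), 0 < s → (∀ α ∈ Δ, α (fun i => (l i : ℝ)) ≤ -(η * s)) →
      ‖((∏ i, z i ^ l i : ℂˣ) : ℂ)‖ ≤ Real.exp (-δ * s) := by
  set φ := Fintype.linearCombination ℝ fun i => Real.log ‖(z i : ℂ)‖
  have hφ : φ ≠ 0 := by
    classical
    obtain ⟨i, hi⟩ := hz1
    refine fun h => Real.log_ne_zero_of_pos_of_ne_one (norm_pos_iff.mpr (z i).ne_zero) hi ?_
    simpa [φ, Fintype.linearCombination_apply_single] using LinearMap.congr_fun h (Pi.single i 1)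
  have hint : ∀ l : ι → ℤ, (∀ α ∈ Δ, α (fun i => (l i : ℝ)) ≤ 0) → φ (fun i => (l i : ℝ)) ≤ 0 :=
    fun l hl => Real.exp_le_one_iff.mp (Units.norm_prod_zpow z l ▸ hz l hl)
  obtain ⟨δ, hδ, hδφ⟩ := φ.exists_le_neg_mul_of_nonpos_on_cone Δ hφ
    (fun x hx => φ.nonpos_of_nonpos_on_intCone Δ hint hx) hη
  refine ⟨δ, hδ, fun l s hs hl => ?_⟩
  rw [Units.norm_prod_zpow, Real.exp_le_exp]
  linarith [hδφ _ s hs hl]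

theorem tendsto_prod_zpow_mul_eval_coneAtBot {ι : Type*} [Fintype ι]
    (Δ : Finset ((ι → ℝ) →ₗ[ℝ] ℝ)) (hspan : Submodule.span ℝ (Δ : Set ((ι → ℝ) →ₗ[ℝ] ℝ)) = ⊤)
    (z : ι → ℂˣ) (hz1 : ∃ i, ‖(z i : ℂ)‖ ≠ 1)
    (hz : ∀ l : ι → ℤ, (∀ α ∈ Δ, α (fun i => (l i : ℝ)) ≤ 0) → ‖((∏ i, z i ^ l i : ℂˣ) : ℂ)‖ ≤ 1)
    (Q : MvPolynomial ι ℂ) {η : ℝ} (hη : 0 < η) :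
    Tendsto (fun l : ι → ℤ => ((∏ i, z i ^ l i : ℂˣ) : ℂ) * MvPolynomial.eval (fun i => (l i : ℂ)) Q)
      (coneAtBot Δ η) (𝓝 0) := by
  obtain ⟨δ, hδ, hχ⟩ := Units.exists_norm_prod_zpow_le_exp_neg Δ z hz1 hz hη
  obtain ⟨K, hK⟩ := exists_norm_le_mul_of_span_eq_top Δ hspan
  obtain ⟨C, hC⟩ := Q.norm_eval_le_mul_one_add_pow
  obtain ⟨α₀, hα₀⟩ : Δ.Nonempty := by
    classical
    refine Finset.nonempty_iff_ne_empty.mpr fun hΔ => ?_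
    obtain ⟨i, -⟩ := hz1
    have hproj : LinearMap.proj i ∈ Submodule.span ℝ (Δ : Set ((ι → ℝ) →ₗ[ℝ] ℝ)) :=
      hspan ▸ Submodule.mem_top
    rw [hΔ, Finset.coe_empty, Submodule.span_empty, Submodule.mem_bot] at hproj
    simpa using LinearMap.congr_fun hproj (Pi.single i 1)
  -- `-α₀ λ` measures how far `λ` has gone to `-∞`; along the cone it controls every `⟨α, λ⟩`
  set s : (ι → ℤ) → ℝ := fun l => -α₀ fun i => (l i : ℝ)
  have hs : Tendsto s (coneAtBot Δ η) atTop := tendsto_atTop.mpr fun R =>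
    eventually_coneAtBot_iff.mpr ⟨max R 1, by positivity, fun l h1 _ => by
      linarith [h1 α₀ hα₀, le_max_left R 1]⟩
  have hbound : ∀ᶠ l in coneAtBot Δ η,
      ‖((∏ i, z i ^ l i : ℂˣ) : ℂ) * MvPolynomial.eval (fun i => (l i : ℂ)) Q‖ ≤
        C * ((1 + K / η * s l) ^ Q.totalDegree * Real.exp (-δ * s l)) := by
    refine eventually_coneAtBot_iff.mpr ⟨1, one_pos, fun l hneg hcomp => ?_⟩
    set L : ι → ℝ := fun i => (l i : ℝ)
    have hs0 : 0 < s l := by linarith [hneg α₀ hα₀]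
    have hL : ‖L‖ ≤ K / η * s l := by
      refine (hK L (s l / η) (by positivity) fun β hβ => ?_).trans_eq (by ring)
      rw [abs_of_neg ((hneg β hβ).trans (by norm_num)), le_div_iff₀ hη]
      linarith [hcomp α₀ hα₀ β hβ]
    have hP := hC _ (fun i => (l i : ℂ)) ((norm_nonneg L).trans hL) fun i =>
      (by simpa [L, Complex.norm_intCast] using norm_le_pi_norm L i : ‖(l i : ℂ)‖ ≤ ‖L‖).trans hL
    rw [norm_mul]
    calc _ ≤ Real.exp (-δ * s l) * (C * (1 + K / η * s l) ^ Q.totalDegree) :=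
          mul_le_mul (hχ l (s l) hs0 fun α hα => by linarith [hcomp α hα α₀ hα₀]) hP
            (norm_nonneg _) (Real.exp_nonneg _)
      _ = _ := by ring
  refine squeeze_zero_norm' hbound ?_
  have hlim := ((tendsto_one_add_mul_pow_mul_exp_neg_atTop (K / η) Q.totalDegree hδ).const_mul C).comp hs
  rwa [mul_zero] at hlim

/-- Existence of the weak constant term for exponential polynomials: let
`f(λ) = ∑_{z ∈ X} χ_z(λ) P_z(λ)` on the lattice `ℤ^r`, with `χ_z(λ) = ∏ i, z_i^{λ_i}`,
and let `f^w` be the partial sum over the characters of absolute value `1`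
(collected in `Xw`). If every character `χ_z`, `z ∈ X`, satisfies `|χ_z(λ)| ≤ 1` on the
cone `{λ : ⟨α, λ⟩ ≤ 0 ∀ α ∈ Δ}` for a finite spanning set `Δ` of linear functionals, then
`f(λ) - f^w(λ) → 0` as `λ → -∞` in the cone (in the sense of the displayed quantifiers). -/
theorem stmt19 {r : ℕ} (X : Finset (Fin r → ℂˣ))
    (P : (Fin r → ℂˣ) → MvPolynomial (Fin r) ℂ)
    (Xw : Finset (Fin r → ℂˣ))
    (hXw : ∀ z, z ∈ Xw ↔ z ∈ X ∧ ∀ i, Norm.norm (z i : ℂ) = 1)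
    (Δ : Finset ((Fin r → ℝ) →ₗ[ℝ] ℝ))
    (hspan : Submodule.span ℝ (Δ : Set ((Fin r → ℝ) →ₗ[ℝ] ℝ)) = ⊤)
    (hbound : ∀ z ∈ X, ∀ l : Fin r → ℤ,
      (∀ α ∈ Δ, α (fun i => (l i : ℝ)) ≤ 0) →
      Norm.norm ((∏ i, z i ^ l i : ℂˣ) : ℂ) ≤ 1) :
    ∀ ε > (0 : ℝ), ∀ η > (0 : ℝ), ∃ R > (0 : ℝ), ∀ l : Fin r → ℤ,
      (∀ α ∈ Δ, α (fun i => (l i : ℝ)) < -R) →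
      (∀ α ∈ Δ, ∀ β ∈ Δ, α (fun i => (l i : ℝ)) < η * β (fun i => (l i : ℝ))) →
      Norm.norm
        ((∑ z ∈ X, ((∏ i, z i ^ l i : ℂˣ) : ℂ) *
            MvPolynomial.eval (fun i => (l i : ℂ)) (P z)) -
          ∑ z ∈ Xw, ((∏ i, z i ^ l i : ℂˣ) : ℂ) *
            MvPolynomial.eval (fun i => (l i : ℂ)) (P z)) < ε := by
  intro ε hε η hη
  have hsub : Xw ⊆ X := fun z hz => ((hXw z).mp hz).1
  have hlim : Tendsto (fun l : Fin r → ℤ => ∑ z ∈ X \ Xw,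
      ((∏ i, z i ^ l i : ℂˣ) : ℂ) * MvPolynomial.eval (fun i => (l i : ℂ)) (P z))
      (coneAtBot Δ η) (𝓝 0) := by
    rw [← Finset.sum_const_zero (s := X \ Xw)]
    refine tendsto_finsetSum _ fun z hz => ?_
    obtain ⟨hzX, hzXw⟩ := Finset.mem_sdiff.mp hz
    have hz1 : ∃ i, ‖(z i : ℂ)‖ ≠ 1 := by simpa [hXw, hzX] using hzXw
    exact tendsto_prod_zpow_mul_eval_coneAtBot Δ hspan z hz1 (hbound z hzX) (P z) hη
  obtain ⟨R, hR, hRε⟩ := eventually_coneAtBot_iff.mp ((Metric.tendsto_nhds.mp hlim) ε hε)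
  refine ⟨R, hR, fun l h1 h2 => ?_⟩
  simpa [← Finset.sum_sdiff_eq_sub hsub] using hRε l h1 h2
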